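/- Let T be the generalized Cantor set built from (α_k) with 0 < α_k < 1/2 and α_k → 1/2. Then T has no isolated points on the left at 0 in the following quantitative sense: for every k, the point ∏_{j<k} α_j · α_k = ∏_{j≤k} α_j belongs to T and is right-scattered with gap μ(∏_{j≤k} α_j) = (1 − 2α_k) ∏_{j<k} α_j, so μ(β)/β = (1 − 2α_k)/α_k at β = ∏_{j≤k} α_j. -/

import Mathlib

/-- Level-`k` approximation of the generalized Cantor set built from ratios
`α n, α (n+1), …` (applied outermost first). `genA α n (k+1)` is obtained from
`genA α n k`-structure by keeping the two closed end-intervals of relative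
length `α n` of `[0,1]` and recursing with the shifted sequence. -/
def genA (α : ℕ → ℝ) : ℕ → ℕ → Set ℝ
  | _, 0 => Set.Icc 0 1
  | n, (k + 1) =>
      ((fun x => α n * x) '' genA α (n + 1) k) ∪
      ((fun x => 1 - α n + α n * x) '' genA α (n + 1) k)

/-- The generalized Cantor set built from the sequence of ratios `α`. -/
def genCantor (α : ℕ → ℝ) : Set ℝ := ⋂ k, genA α 0 k

/-- The graininess (forward-jump gap) of a set `T` at `β`. -/
noncomputable def mu (T : Set ℝ) (β : ℝ) : ℝ := sInf {t ∈ T | β < t} - β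

open Filter

/-!
The point `β = ∏_{j ≤ k} α_j` is `L α_k` and `γ = L (1 - α_k)` with `L = ∏_{j<k} α_j`: the
images of the endpoints `α_k · 1` and `1 - α_k + α_k · 0` of the first gap of the level-`k` copy,
under the self-similarity `y ↦ L y` that maps the construction started at `k` into the leftmost
interval `[0, L]`. Conversely every point of `A_{k+1}` either lies in that leftmost copy or is
at least `L`, so nothing of `T` lies strictly between `β` and `γ` and `μ(β) = γ - β`.
-/

lemma mu_eq_sub_of_isLeast {T : Set ℝ} {β γ : ℝ} (h : IsLeast {t ∈ T | β < t} γ) :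
    mu T β = γ - β := by
  rw [mu, h.csInf_eq]

section GenA

variable {α : ℕ → ℝ}

lemma zero_mem_genA (n m : ℕ) : (0 : ℝ) ∈ genA α n m := by
  induction m generalizing n with
  | zero => exact ⟨le_rfl, zero_le_one⟩
  | succ m ih => exact Or.inl ⟨0, ih (n + 1), mul_zero _⟩

lemma one_mem_genA (n m : ℕ) : (1 : ℝ) ∈ genA α n m := by
  induction m generalizing n with
  | zero => exact ⟨zero_le_one, le_rfl⟩
  | succ m ih => exact Or.inr ⟨1, ih (n + 1), by ring⟩

lemma genA_subset_Icc (h0 : ∀ j, 0 ≤ α j) (h1 : ∀ j, α j ≤ 1) (n m : ℕ) :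
    genA α n m ⊆ Set.Icc 0 1 := by
  induction m generalizing n with
  | zero => exact subset_rfl
  | succ m ih =>
    rintro _ (⟨y, hy, rfl⟩ | ⟨y, hy, rfl⟩) <;>
    · obtain ⟨hy0, hy1⟩ := ih (n + 1) hy
      have := h0 n
      have := h1 n
      constructor <;> nlinarith

lemma genA_succ_subset (h0 : ∀ j, 0 ≤ α j) (h1 : ∀ j, α j ≤ 1) (n m : ℕ) :
    genA α n (m + 1) ⊆ genA α n m := by
  induction m generalizing n with
  | zero => exact genA_subset_Icc h0 h1 n 1
  | succ m ih =>
    exact Set.union_subset_union (Set.image_mono (ih (n + 1))) (Set.image_mono (ih (n + 1)))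

lemma genA_antitone (h0 : ∀ j, 0 ≤ α j) (h1 : ∀ j, α j ≤ 1) (n : ℕ) :
    Antitone (genA α n) :=
  antitone_nat_of_succ_le (genA_succ_subset h0 h1 n)

lemma genA_succ_subset_Icc_union (h0 : ∀ j, 0 ≤ α j) (h1 : ∀ j, α j ≤ 1) (n m : ℕ) :
    genA α n (m + 1) ⊆ Set.Icc 0 (α n) ∪ Set.Icc (1 - α n) 1 := by
  have := h0 n
  rintro _ (⟨y, hy, rfl⟩ | ⟨y, hy, rfl⟩) <;> obtain ⟨hy0, hy1⟩ := genA_subset_Icc h0 h1 _ _ hy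
  · exact Or.inl ⟨mul_nonneg this hy0, mul_le_of_le_one_right this hy1⟩
  · exact Or.inr ⟨by nlinarith, by nlinarith⟩

lemma prod_mul_mem_genA (k : ℕ) {n m : ℕ} {y : ℝ} (hy : y ∈ genA α (n + k) m) :
    (∏ j ∈ Finset.range k, α (n + j)) * y ∈ genA α n (m + k) := by
  induction k generalizing m y with
  | zero => simpa using hy
  | succ k ih =>
    have hy' : α (n + k) * y ∈ genA α (n + k) (m + 1) := Or.inl ⟨y, hy, rfl⟩
    rw [Finset.prod_range_succ, mul_assoc, show m + (k + 1) = m + 1 + k by omega]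
    exact ih hy'

lemma exists_eq_prod_mul_or_prod_le_of_mem_genA (h0 : ∀ j, 0 ≤ α j) (h1 : ∀ j, α j ≤ 1 / 2)
    (k : ℕ) {n m : ℕ} {x : ℝ} (hx : x ∈ genA α n (m + k)) :
    (∃ y ∈ genA α (n + k) m, (∏ j ∈ Finset.range k, α (n + j)) * y = x) ∨
      ∏ j ∈ Finset.range k, α (n + j) ≤ x := by
  have h1' : ∀ j, α j ≤ 1 := fun j => (h1 j).trans (by norm_num)
  induction k generalizing m x with
  | zero => exact Or.inl ⟨x, by simpa using hx, by simp⟩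
  | succ k ih =>
    set L := ∏ j ∈ Finset.range k, α (n + j)
    have hL : 0 ≤ L := Finset.prod_nonneg fun j _ => h0 (n + j)
    have ha0 := h0 (n + k)
    have ha1 := h1 (n + k)
    rw [Finset.prod_range_succ]
    rw [show m + (k + 1) = m + 1 + k by omega] at hx
    rcases ih hx with ⟨_, ⟨z, hz, rfl⟩ | ⟨z, hz, rfl⟩, rfl⟩ | hLx
    · exact Or.inl ⟨z, hz, by ring⟩
    · have hz0 := (genA_subset_Icc h0 h1' _ _ hz).1
      exact Or.inr (mul_le_mul_of_nonneg_left (by nlinarith) hL)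
    · exact Or.inr (le_trans (mul_le_of_le_one_right hL (h1' _)) hLx)

end GenA

section GenCantor

variable {α : ℕ → ℝ}

lemma prod_mul_mem_genCantor (h0 : ∀ j, 0 ≤ α j) (h1 : ∀ j, α j ≤ 1) (k : ℕ) {y : ℝ}
    (hy : ∀ m, y ∈ genA α k m) : (∏ j ∈ Finset.range k, α j) * y ∈ genCantor α := by
  refine Set.mem_iInter.2 fun m => genA_antitone h0 h1 0 (Nat.le_add_right m k) ?_
  simpa only [zero_add] using prod_mul_mem_genA (n := 0) k (by simpa only [zero_add] using hy m)

lemma le_of_mem_genCantor_of_prod_lt (h0 : ∀ j, 0 ≤ α j) (h1 : ∀ j, α j ≤ 1 / 2) (k : ℕ)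
    {t : ℝ} (ht : t ∈ genCantor α) (hlt : ∏ j ∈ Finset.range (k + 1), α j < t) :
    (∏ j ∈ Finset.range k, α j) * (1 - α k) ≤ t := by
  have h1' : ∀ j, α j ≤ 1 := fun j => (h1 j).trans (by norm_num)
  have hsplit := exists_eq_prod_mul_or_prod_le_of_mem_genA h0 h1 k (Set.mem_iInter.1 ht (1 + k))
  simp only [zero_add] at hsplit
  set L := ∏ j ∈ Finset.range k, α j
  have hL : 0 ≤ L := Finset.prod_nonneg fun j _ => h0 j
  rw [Finset.prod_range_succ] at hlt
  rcases hsplit with ⟨y, hy, rfl⟩ | hLt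
  · rcases genA_succ_subset_Icc_union h0 h1' k 0 hy with hy | hy
    · exact absurd hlt (not_lt.2 (mul_le_mul_of_nonneg_left hy.2 hL))
    · exact mul_le_mul_of_nonneg_left hy.1 hL
  · exact le_trans (mul_le_of_le_one_right hL (by linarith [h0 k])) hLt

lemma prod_mul_one_sub_mem_genCantor (h0 : ∀ j, 0 ≤ α j) (h1 : ∀ j, α j ≤ 1) (k : ℕ) :
    (∏ j ∈ Finset.range k, α j) * (1 - α k) ∈ genCantor α :=
  prod_mul_mem_genCantor h0 h1 k fun m =>
    genA_antitone h0 h1 k m.le_succ (Or.inr ⟨0, zero_mem_genA _ _, by ring⟩)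

lemma prod_range_succ_mem_genCantor (h0 : ∀ j, 0 ≤ α j) (h1 : ∀ j, α j ≤ 1) (k : ℕ) :
    ∏ j ∈ Finset.range (k + 1), α j ∈ genCantor α := by
  rw [Finset.prod_range_succ]
  exact prod_mul_mem_genCantor h0 h1 k fun m =>
    genA_antitone h0 h1 k m.le_succ (Or.inl ⟨1, one_mem_genA _ _, mul_one _⟩)

lemma mu_genCantor_prod_range_succ (hα : ∀ j, 0 < α j ∧ α j < 1 / 2) (k : ℕ) :
    mu (genCantor α) (∏ j ∈ Finset.range (k + 1), α j) =
      (1 - 2 * α k) * ∏ j ∈ Finset.range k, α j := by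
  have h0 : ∀ j, 0 ≤ α j := fun j => (hα j).1.le
  have h1 : ∀ j, α j ≤ 1 / 2 := fun j => (hα j).2.le
  have hL : 0 < ∏ j ∈ Finset.range k, α j := Finset.prod_pos fun j _ => (hα j).1
  have hβγ : ∏ j ∈ Finset.range (k + 1), α j < (∏ j ∈ Finset.range k, α j) * (1 - α k) := by
    rw [Finset.prod_range_succ]
    exact mul_lt_mul_of_pos_left (by linarith [(hα k).2]) hL
  have hγ := prod_mul_one_sub_mem_genCantor h0 (fun j => (h1 j).trans (by norm_num)) k
  have hleast : IsLeast {t ∈ genCantor α | ∏ j ∈ Finset.range (k + 1), α j < t}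
      ((∏ j ∈ Finset.range k, α j) * (1 - α k)) :=
    ⟨⟨hγ, hβγ⟩, fun t ht => le_of_mem_genCantor_of_prod_lt h0 h1 k ht.1 ht.2⟩
  rw [mu_eq_sub_of_isLeast hleast, Finset.prod_range_succ]
  ring

end GenCantor

theorem genCantor_scattered_points_general (α : ℕ → ℝ) (hα : ∀ k, 0 < α k ∧ α k < 1 / 2) :
    ∀ k : ℕ,
      (∏ j ∈ Finset.range (k + 1), α j) ∈ genCantor α ∧
      0 < mu (genCantor α) (∏ j ∈ Finset.range (k + 1), α j) ∧
      mu (genCantor α) (∏ j ∈ Finset.range (k + 1), α j) =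
        (1 - 2 * α k) * ∏ j ∈ Finset.range k, α j ∧
      mu (genCantor α) (∏ j ∈ Finset.range (k + 1), α j) /
          (∏ j ∈ Finset.range (k + 1), α j) = (1 - 2 * α k) / α k := by
  intro k
  have hL : 0 < ∏ j ∈ Finset.range k, α j := Finset.prod_pos fun j _ => (hα j).1
  have hmu := mu_genCantor_prod_range_succ hα k
  have hβ_mem := prod_range_succ_mem_genCantor (fun j => (hα j).1.le)
    (fun j => (hα j).2.le.trans (by norm_num)) k
  refine ⟨hβ_mem, ?_, hmu, ?_⟩
  · exact hmu ▸ mul_pos (by linarith [(hα k).2]) hL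
  · rw [hmu, Finset.prod_range_succ, mul_comm (1 - 2 * α k), mul_div_mul_left _ _ hL.ne']

/-- for every `k`, the point `β = ∏_{j ≤ k} α_j` belongs to `T` and is
right-scattered with gap `μ(β) = (1 - 2 α_k) ∏_{j<k} α_j`, so `μ(β)/β = (1-2α_k)/α_k`. -/
theorem genCantor_scattered_points (α : ℕ → ℝ) (hα : ∀ k, 0 < α k ∧ α k < 1 / 2)
    (hlim : Tendsto α atTop (nhds (1 / 2))) :
    ∀ k : ℕ,
      (∏ j ∈ Finset.range (k + 1), α j) ∈ genCantor α ∧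
      0 < mu (genCantor α) (∏ j ∈ Finset.range (k + 1), α j) ∧
      mu (genCantor α) (∏ j ∈ Finset.range (k + 1), α j) =
        (1 - 2 * α k) * ∏ j ∈ Finset.range k, α j ∧
      mu (genCantor α) (∏ j ∈ Finset.range (k + 1), α j) /
          (∏ j ∈ Finset.range (k + 1), α j) = (1 - 2 * α k) / α k :=
  genCantor_scattered_points_general α hα
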